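/- arXiv:0811.2909 — 3 statements merged into one kernel-verified Lean document; each statement's English description precedes it below -/
import Mathlib

section
/- Let P_n ∈ ℤ[x] satisfy P_n(t + t⁻¹) = tⁿ + t^{−n} for n ≥ 1 and P_0 = 1. For each n ≥ 0, write xⁿ = Σ_{i=0}^{n} λ_{i,n} P_i with λ_{i,n} ∈ ℤ (possible since P_i is monic of degree i for i ≥ 1). Then: (1) λ_{i,n} = 0 whenever i ≢ n (mod 2); (2) λ_{i,n} ≥ 0 for all i, n; and (3) λ_{i,n} < λ_{i−2,n} for every i ≥ 2 with i ≡ n (mod 2) and n ≥ 1. -/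
/-!
Substituting `X ↦ T + T⁻¹` into Laurent polynomials sends `P i` to `T ^ i + T ^ (-i)` for
`i ≥ 1` and `P 0` to `1`, so for `i ≥ 0` the coefficient of `T ^ i` in the image of
`∑ λ_j P_j` is `λ_i`. Hence `λ_{i,n}` is the coefficient of `T ^ i` in `(T + T⁻¹) ^ n`, which
by the binomial theorem is `n.choose ((n - i) / 2)` when `i ≡ n [MOD 2]` and `0` otherwise.
Positivity and the strict decrease are then properties of binomial coefficients below the
middle.
-/

open Polynomial

/-- The normalized Chebyshev polynomials of the first kind:
`Q 0 = 2`, `Q 1 = X`, `Q (n+2) = X * Q (n+1) - Q n`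
(these satisfy `Q n (t + t⁻¹) = tⁿ + t⁻ⁿ`). -/
noncomputable def chebQ : ℕ → Polynomial ℤ
  | 0 => 2
  | 1 => Polynomial.X
  | (n + 2) => Polynomial.X * chebQ (n + 1) - chebQ n

/-- The family `P` of the statement: `P 0 = 1` and `P n` is the `n`-th normalized
Chebyshev polynomial of the first kind for `n ≥ 1`. -/
noncomputable def chebP (n : ℕ) : Polynomial ℤ :=
  if n = 0 then 1 else chebQ n

open LaurentPolynomial

theorem aeval_chebQ_of_mul_eq_one {A : Type*} [CommRing A] [Algebra ℤ A] {x y : A}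
    (h : x * y = 1) :
    ∀ n, aeval (x + y) (chebQ n) = x ^ n + y ^ n
  | 0 => by simp only [chebQ, map_ofNat, pow_zero]; norm_num
  | 1 => by simp [chebQ]
  | n + 2 => by
    simp only [chebQ, map_sub, map_mul, aeval_X, aeval_chebQ_of_mul_eq_one h n,
      aeval_chebQ_of_mul_eq_one h (n + 1)]
    linear_combination (x ^ n + y ^ n) * h

theorem aeval_chebQ_T_one_add_T_neg_one (n : ℕ) :
    aeval (T 1 + T (-1) : ℤ[T;T⁻¹]) (chebQ n) = T n + T (-n) := by
  rw [aeval_chebQ_of_mul_eq_one (by rw [← T_add]; simp), T_pow, T_pow]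
  simp

theorem coeff_aeval_chebP (i j : ℕ) :
    (aeval (T 1 + T (-1) : ℤ[T;T⁻¹]) (chebP j)).coeff i = if j = i then 1 else 0 := by
  rcases Nat.eq_zero_or_pos j with rfl | hj
  · simp [chebP, ← T_zero, eq_comm]
  · rw [chebP, if_neg hj.ne', aeval_chebQ_T_one_add_T_neg_one, AddMonoidAlgebra.coeff_add,
      Finsupp.add_apply, T_apply, T_apply]
    simp only [Nat.cast_inj, if_neg (show -(j : ℤ) ≠ i by omega), add_zero]

theorem coeff_aeval_sum_C_mul_chebP (c : ℕ → ℤ) {N i : ℕ} (hi : i ≤ N) :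
    (aeval (T 1 + T (-1) : ℤ[T;T⁻¹])
      (∑ j ∈ Finset.range (N + 1), Polynomial.C (c j) * chebP j)).coeff i = c i := by
  simp only [Polynomial.C_mul', map_sum, map_zsmul, AddMonoidAlgebra.coeff_sum,
    Finsupp.finsetSum_apply, AddMonoidAlgebra.coeff_smul_apply, coeff_aeval_chebP, smul_eq_mul,
    mul_ite, mul_one, mul_zero]
  rw [Finset.sum_ite_eq', if_pos (Finset.mem_range_succ_iff.mpr hi)]

theorem T_one_add_T_neg_one_pow {R : Type*} [CommSemiring R] (n : ℕ) :
    (T 1 + T (-1) : R[T;T⁻¹]) ^ n =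
      ∑ k ∈ Finset.range (n + 1), n.choose k • T (n - 2 * k) := by
  rw [add_comm, add_pow]
  refine Finset.sum_congr rfl fun k hk => ?_
  rw [T_pow, T_pow, ← T_add, mul_comm, ← nsmul_eq_mul]
  congr 2
  have := Finset.mem_range_succ_iff.mp hk
  push_cast [this]; ring

theorem coeff_T_one_add_T_neg_one_pow {R : Type*} [CommSemiring R] (n : ℕ) (j : ℤ) :
    ((T 1 + T (-1) : R[T;T⁻¹]) ^ n).coeff j
      = ∑ k ∈ Finset.range (n + 1), if (n : ℤ) - 2 * k = j then (n.choose k : R) else 0 := by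
  simp only [T_one_add_T_neg_one_pow, AddMonoidAlgebra.coeff_sum, Finsupp.finsetSum_apply,
    AddMonoidAlgebra.coeff_smul_apply, T_apply]
  simp only [smul_ite, nsmul_eq_mul, mul_one, smul_zero]

theorem coeff_T_one_add_T_neg_one_pow_sub_two_mul {R : Type*} [CommSemiring R] (n k : ℕ) :
    ((T 1 + T (-1) : R[T;T⁻¹]) ^ n).coeff (n - 2 * k) = n.choose k := by
  rw [coeff_T_one_add_T_neg_one_pow]
  rcases le_or_gt k n with hk | hk
  · rw [Finset.sum_eq_single k (fun m _ hm => if_neg (by omega))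
      (fun hk' => absurd (Finset.mem_range_succ_iff.mpr hk) hk'), if_pos rfl]
  · rw [Nat.choose_eq_zero_of_lt hk, Nat.cast_zero]
    refine Finset.sum_eq_zero fun m hm => if_neg ?_
    have := Finset.mem_range_succ_iff.mp hm
    omega

theorem coeff_T_one_add_T_neg_one_pow_of_odd {R : Type*} [CommSemiring R] {n : ℕ} {j : ℤ}
    (h : Odd (n - j)) : ((T 1 + T (-1) : R[T;T⁻¹]) ^ n).coeff j = 0 := by
  rw [coeff_T_one_add_T_neg_one_pow]
  refine Finset.sum_eq_zero fun k _ => if_neg ?_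
  rintro rfl
  exact Int.not_odd_iff_even.mpr ⟨k, by ring⟩ h

theorem Nat.choose_lt_succ_of_two_mul_add_one_lt {n r : ℕ} (h : 2 * r + 1 < n) :
    n.choose r < n.choose (r + 1) := by
  refine Nat.lt_of_mul_lt_mul_right (a := n - r) ?_
  rw [← Nat.choose_succ_right_eq]
  exact Nat.mul_lt_mul_of_pos_left (by omega) (Nat.choose_pos (by omega))

theorem coeffs_of_powers_in_chebP_basis
    (lam : ℕ → ℕ → ℤ)
    (hexp : ∀ n : ℕ, (Polynomial.X : Polynomial ℤ) ^ n =
      ∑ i ∈ Finset.range (n + 1), Polynomial.C (lam i n) * chebP i) :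
    (∀ i n : ℕ, i ≤ n → i % 2 ≠ n % 2 → lam i n = 0) ∧
    (∀ i n : ℕ, i ≤ n → 0 ≤ lam i n) ∧
    (∀ i n : ℕ, 2 ≤ i → i ≤ n → i % 2 = n % 2 → 1 ≤ n → lam i n < lam (i - 2) n) := by
  have hlam (i n : ℕ) (hi : i ≤ n) :
      lam i n = ((T 1 + T (-1) : ℤ[T;T⁻¹]) ^ n).coeff i := by
    rw [← coeff_aeval_sum_C_mul_chebP (lam · n) hi, ← hexp, map_pow, aeval_X]
  have hzero (i n : ℕ) (hi : i ≤ n) (hpar : i % 2 ≠ n % 2) : lam i n = 0 := by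
    rw [hlam i n hi, coeff_T_one_add_T_neg_one_pow_of_odd (by rw [Int.odd_iff]; omega)]
  have hchoose (i n : ℕ) (hi : i ≤ n) (hpar : i % 2 = n % 2) :
      lam i n = n.choose ((n - i) / 2) := by
    rw [hlam i n hi, ← coeff_T_one_add_T_neg_one_pow_sub_two_mul]
    congr 1; omega
  refine ⟨hzero, fun i n hi => ?_, fun i n h2 hi hpar _ => ?_⟩
  · by_cases hpar : i % 2 = n % 2
    · rw [hchoose i n hi hpar]; positivity
    · rw [hzero i n hi hpar]
  · rw [hchoose i n hi hpar, hchoose (i - 2) n (by omega) (by omega),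
      show (n - (i - 2)) / 2 = (n - i) / 2 + 1 by omega]
    exact_mod_cast Nat.choose_lt_succ_of_two_mul_add_one_lt (by omega)
end

section
/- Let K be a field and u₁, u₂ nonzero elements of (a field extension of) the field of rational functions K(u₁,u₂). Define the sequence (x_n)_{n∈ℤ} in K(u₁,u₂) by x₁ = u₁, x₂ = u₂, and x_{n+1}·x_{n−1} = x_n² + 1 (assuming all x_n are nonzero so the recurrence makes sense). Set z = (1 + u₁² + u₂²)/(u₁u₂). Then for every n, z·x_n = x_{n−1} + x_{n+1}. -/
/-!
Subtracting the exchange relations at `n` and `n + 1` gives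
`x (n + 1) * (x (n - 1) + x (n + 1)) = x n * (x n + x (n + 2))`, so the ratio
`(x (n - 1) + x (n + 1)) / x n` does not depend on `n`. At `n = 1` the exchange relation gives
`x 0 = (u₁² + 1) / u₂`, and the ratio is `(1 + u₁² + u₂²) / (u₁ u₂)`.
-/

section ExchangeRecurrence

theorem exchange_cross_mul_eq {R : Type*} [CommRing R] {x : ℤ → R}
    (hrec : ∀ n, x (n + 1) * x (n - 1) = x n ^ 2 + 1) (n : ℤ) :
    x (n + 1) * (x (n - 1) + x (n + 1)) = x n * (x n + x (n + 2)) := by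
  have h₁ := hrec n
  have h₂ := hrec (n + 1)
  rw [add_sub_cancel_right, add_assoc, one_add_one_eq_two] at h₂
  linear_combination h₁ - h₂

variable {F : Type*} [Field F]

def exchangeRatio (x : ℤ → F) (n : ℤ) : F :=
  (x (n - 1) + x (n + 1)) / x n

variable {x : ℤ → F} (hne : ∀ n, x n ≠ 0) (hrec : ∀ n, x (n + 1) * x (n - 1) = x n ^ 2 + 1)
include hne hrec

theorem exchangeRatio_periodic : Function.Periodic (exchangeRatio x) 1 := by
  intro n
  rw [exchangeRatio, exchangeRatio, add_sub_cancel_right, add_assoc, one_add_one_eq_two,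
    div_eq_div_iff (hne _) (hne _)]
  linear_combination (exchange_cross_mul_eq hrec n).symm

theorem exchangeRatio_eq (m n : ℤ) : exchangeRatio x m = exchangeRatio x n := by
  have hper := exchangeRatio_periodic hne hrec
  simpa using (hper.int_mul_eq m).trans (hper.int_mul_eq n).symm

end ExchangeRecurrence

open MvPolynomial

theorem kronecker_cluster_linear_recurrence_general
    (K : Type*) [Field K]
    (x : ℤ → FractionRing (MvPolynomial (Fin 2) K))
    (u : Fin 2 → FractionRing (MvPolynomial (Fin 2) K))
    (hx1 : x 1 = u 0) (hx2 : x 2 = u 1)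
    (hne : ∀ n : ℤ, x n ≠ 0)
    (hrec : ∀ n : ℤ, x (n + 1) * x (n - 1) = x n ^ 2 + 1) :
    ∀ n : ℤ, (1 + u 0 ^ 2 + u 1 ^ 2) / (u 0 * u 1) * x n = x (n - 1) + x (n + 1) := by
  have hz : (1 + u 0 ^ 2 + u 1 ^ 2) / (u 0 * u 1) = exchangeRatio x 1 := by
    have hx0 : x 2 * x 0 = x 1 ^ 2 + 1 := by simpa using hrec 1
    rw [exchangeRatio, sub_self, one_add_one_eq_two, ← hx1, ← hx2,
      div_eq_div_iff (mul_ne_zero (hne 1) (hne 2)) (hne 1)]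
    linear_combination -x 1 * hx0
  intro n
  rw [hz, exchangeRatio_eq hne hrec 1 n, exchangeRatio, div_mul_cancel₀ _ (hne n)]

theorem kronecker_cluster_linear_recurrence
    (K : Type*) [Field K]
    (x : ℤ → FractionRing (MvPolynomial (Fin 2) K))
    (u : Fin 2 → FractionRing (MvPolynomial (Fin 2) K))
    (hu : ∀ i, u i = algebraMap (MvPolynomial (Fin 2) K) _ (MvPolynomial.X i))
    (hx1 : x 1 = u 0) (hx2 : x 2 = u 1)
    (hne : ∀ n : ℤ, x n ≠ 0)
    (hrec : ∀ n : ℤ, x (n + 1) * x (n - 1) = x n ^ 2 + 1) :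
    ∀ n : ℤ, (1 + u 0 ^ 2 + u 1 ^ 2) / (u 0 * u 1) * x n = x (n - 1) + x (n + 1) :=
  kronecker_cluster_linear_recurrence_general K x u hx1 hx2 hne hrec
end

section
/- Let C be a 2-Calabi–Yau triangulated category over a field k (so Ext¹_C(X,Y) ≅ D Ext¹_C(Y,X) for all objects, where D is k-linear duality; in particular dim Ext¹(X,Y) = dim Ext¹(Y,X)). Write [X,Y]¹ = dim_k Hom_C(X, Y[1]). Suppose M, N are objects with Ext¹_C(N,M) ≠ 0 and M → Z → N --ε--> M[1] is a non-split triangle. Then [Z,Z]¹ < [M ⊕ N, M ⊕ N]¹. -/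
/-!
Applying `Hom(-, R)` to the triangle `M → Z → N → M⟦1⟧` gives an exact sequence
`Hom(N, R) → Hom(Z, R) → Hom(M, R)`, hence `[Z, R] ≤ [N, R] + [M, R]`. For `R = M⟦1⟧` the
inequality is strict: the nonzero `ε` lies in the kernel of `Hom(N, M⟦1⟧) → Hom(Z, M⟦1⟧)`.
Taking `R = Z⟦1⟧`, using the 2-Calabi–Yau symmetry to swap arguments, and then `R = N⟦1⟧` and
`R = M⟦1⟧`, bounds `[Z, Z]¹` strictly by the four summands of `[M ⊞ N, M ⊞ N]¹`.
-/

open CategoryTheory CategoryTheory.Limits CategoryTheory.Pretriangulated Module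

namespace LinearMap

variable {k A B W : Type*} [DivisionRing k] [AddCommGroup A] [AddCommGroup B] [AddCommGroup W]
  [Module k A] [Module k B] [Module k W]
  [FiniteDimensional k A] [FiniteDimensional k B] [FiniteDimensional k W]

theorem finrank_add_finrank_ker_le_of_ker_le_range (u : A →ₗ[k] B) (v : B →ₗ[k] W)
    (h : ker v ≤ range u) :
    finrank k B + finrank k (ker u) ≤ finrank k A + finrank k W := by
  have hv := finrank_range_add_finrank_ker v
  have hu := finrank_range_add_finrank_ker u
  have hker : finrank k (ker v) ≤ finrank k (range u) := Submodule.finrank_mono h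
  have hrange : finrank k (range v) ≤ finrank k W := Submodule.finrank_le _
  omega

end LinearMap

namespace CategoryTheory

variable {k : Type*} [DivisionRing k] {C : Type*} [Category C] [Preadditive C] [Linear k C]

section Biproducts

variable [HasBinaryBiproducts C]

noncomputable def Linear.biprodHomEquiv (A B X : C) :
    ((A ⊞ B : C) ⟶ X) ≃ₗ[k] (A ⟶ X) × (B ⟶ X) where
  toFun φ := (biprod.inl ≫ φ, biprod.inr ≫ φ)
  map_add' φ ψ := by simp
  map_smul' c φ := by simp
  invFun p := biprod.desc p.1 p.2
  left_inv φ := by apply biprod.hom_ext' <;> simp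
  right_inv p := by simp

noncomputable def Linear.homBiprodEquiv (X A B : C) :
    (X ⟶ A ⊞ B) ≃ₗ[k] (X ⟶ A) × (X ⟶ B) where
  toFun φ := (φ ≫ biprod.fst, φ ≫ biprod.snd)
  map_add' φ ψ := by simp
  map_smul' c φ := by simp
  invFun p := biprod.lift p.1 p.2
  left_inv φ := by apply biprod.hom_ext <;> simp
  right_inv p := by simp

variable [∀ X Y : C, FiniteDimensional k (X ⟶ Y)]

theorem finrank_biprod_hom (A B X : C) :
    finrank k ((A ⊞ B : C) ⟶ X) = finrank k (A ⟶ X) + finrank k (B ⟶ X) := by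
  rw [(Linear.biprodHomEquiv A B X).finrank_eq, finrank_prod]

theorem finrank_hom_biprod (X A B : C) :
    finrank k (X ⟶ A ⊞ B) = finrank k (X ⟶ A) + finrank k (X ⟶ B) := by
  rw [(Linear.homBiprodEquiv X A B).finrank_eq, finrank_prod]

theorem finrank_biprod_hom_map_biprod (F : C ⥤ C) [F.Additive] (A B : C) :
    finrank k ((A ⊞ B : C) ⟶ F.obj (A ⊞ B)) =
      finrank k (A ⟶ F.obj A) + finrank k (A ⟶ F.obj B) +
        (finrank k (B ⟶ F.obj A) + finrank k (B ⟶ F.obj B)) := by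
  have := preservesBinaryBiproducts_of_preservesBiproducts F
  rw [(Linear.homCongr k (Iso.refl _) (F.mapBiprod A B)).finrank_eq, finrank_biprod_hom,
    finrank_hom_biprod, finrank_hom_biprod]

end Biproducts

namespace Pretriangulated

variable [HasZeroObject C] [HasShift C ℤ] [∀ n : ℤ, (CategoryTheory.shiftFunctor C n).Additive]
  [Pretriangulated C] {T : Triangle C}

theorem Triangle.ker_leftComp_mor₁_le_range (hT : T ∈ distTriang C) (R : C) :
    LinearMap.ker (Linear.leftComp k R T.mor₁) ≤ LinearMap.range (Linear.leftComp k R T.mor₂) := by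
  intro φ hφ
  obtain ⟨ψ, hψ⟩ := T.yoneda_exact₂ hT φ hφ
  exact ⟨ψ, hψ.symm⟩

variable [∀ X Y : C, FiniteDimensional k (X ⟶ Y)]

theorem Triangle.finrank_hom_obj₂_le (hT : T ∈ distTriang C) (R : C) :
    finrank k (T.obj₂ ⟶ R) ≤ finrank k (T.obj₃ ⟶ R) + finrank k (T.obj₁ ⟶ R) :=
  (Nat.le_add_right _ _).trans <| LinearMap.finrank_add_finrank_ker_le_of_ker_le_range _ _
    (Triangle.ker_leftComp_mor₁_le_range hT R)

theorem Triangle.finrank_hom_obj₂_shift_lt (hT : T ∈ distTriang C) (h : T.mor₃ ≠ 0) :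
    finrank k (T.obj₂ ⟶ T.obj₁⟦(1 : ℤ)⟧) <
      finrank k (T.obj₃ ⟶ T.obj₁⟦(1 : ℤ)⟧) + finrank k (T.obj₁ ⟶ T.obj₁⟦(1 : ℤ)⟧) := by
  have hexact := LinearMap.finrank_add_finrank_ker_le_of_ker_le_range _ _
    (Triangle.ker_leftComp_mor₁_le_range (k := k) hT (T.obj₁⟦(1 : ℤ)⟧))
  have hmor₃ : T.mor₃ ∈ LinearMap.ker (Linear.leftComp k (T.obj₁⟦(1 : ℤ)⟧) T.mor₂) :=
    comp_distTriang_mor_zero₂₃ T hT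
  have hker : 0 < finrank k (LinearMap.ker (Linear.leftComp k (T.obj₁⟦(1 : ℤ)⟧) T.mor₂)) :=
    finrank_pos_iff_exists_ne_zero.mpr ⟨⟨T.mor₃, hmor₃⟩, by simpa [Subtype.ext_iff] using h⟩
  omega

end Pretriangulated

end CategoryTheory

theorem selfext_middle_lt_of_nonsplit
    {k : Type*} [Field k] {C : Type*} [Category C] [Preadditive C] [Linear k C]
    [HasZeroObject C] [HasShift C ℤ] [∀ n : ℤ, (shiftFunctor C n).Additive]
    [Pretriangulated C] [HasBinaryBiproducts C]
    [∀ X Y : C, FiniteDimensional k (X ⟶ Y)]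
    (hCY : ∀ X Y : C,
      Module.finrank k (X ⟶ Y⟦(1 : ℤ)⟧) = Module.finrank k (Y ⟶ X⟦(1 : ℤ)⟧))
    (M Z N : C) (f : M ⟶ Z) (g : Z ⟶ N) (ε : N ⟶ M⟦(1 : ℤ)⟧)
    (hT : Triangle.mk f g ε ∈ distTriang C)
    (hε : ε ≠ 0) :
    Module.finrank k (Z ⟶ Z⟦(1 : ℤ)⟧) <
      Module.finrank k ((M ⊞ N : C) ⟶ (M ⊞ N : C)⟦(1 : ℤ)⟧) := by
  calc finrank k (Z ⟶ Z⟦(1 : ℤ)⟧)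
      ≤ finrank k (N ⟶ Z⟦(1 : ℤ)⟧) + finrank k (M ⟶ Z⟦(1 : ℤ)⟧) :=
        Triangle.finrank_hom_obj₂_le hT _
    _ = finrank k (Z ⟶ N⟦(1 : ℤ)⟧) + finrank k (Z ⟶ M⟦(1 : ℤ)⟧) := by rw [hCY N Z, hCY M Z]
    _ < (finrank k (N ⟶ N⟦(1 : ℤ)⟧) + finrank k (M ⟶ N⟦(1 : ℤ)⟧)) +
          (finrank k (N ⟶ M⟦(1 : ℤ)⟧) + finrank k (M ⟶ M⟦(1 : ℤ)⟧)) :=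
        add_lt_add_of_le_of_lt (Triangle.finrank_hom_obj₂_le hT _)
          (Triangle.finrank_hom_obj₂_shift_lt hT hε)
    _ = finrank k ((M ⊞ N : C) ⟶ (M ⊞ N : C)⟦(1 : ℤ)⟧) := by
        rw [finrank_biprod_hom_map_biprod, hCY M N]
        ring
end
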